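/- For all (a₁,…,a₆) ∈ ℂ⁶, the three 2×2 minors of the matrix ((z+a₁x, a₂x, y),(a₃y+a₄x, z+a₅y+a₆x, x)) with entries in the polynomial ring ℂ[x,y,z] are linearly independent over ℂ (as degree-2 homogeneous polynomials). -/

import Mathlib

/-!
Differentiating in `z` sends the three minors to the linear forms `2z + (a₁ + a₆)x + a₅y`, `x`
and `-y`. Evaluating these at the unit vectors `e_z, e_x, e_y` gives an upper triangular matrix
with determinant `-2`, so no nontrivial combination of the minors vanishes.
-/

open MvPolynomial

theorem linearIndependent_of_det_functionals_ne_zero {K V ι : Type*} [Field K] [AddCommGroup V]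
    [Module K V] [Fintype ι] [DecidableEq ι] {v : ι → V} (φ : ι → V →ₗ[K] K)
    (A : Matrix ι ι K) (hA : ∀ i j, φ j (v i) = A i j) (hdet : A.det ≠ 0) :
    LinearIndependent K v := by
  have hrows : LinearMap.pi φ ∘ v = fun i ↦ A i := by
    ext i j
    exact hA i j
  exact .of_comp (LinearMap.pi φ) (hrows ▸ Matrix.linearIndependent_rows_of_det_ne_zero hdet)

/-- For every `(a₁,…,a₆) ∈ ℂ⁶`, the three 2×2 minors of the matrix
`((z+a₁x, a₂x, y),(a₃y+a₄x, z+a₅y+a₆x, x))` are linearly independent over ℂ. -/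
theorem big_cell_minors_linearIndependent (a : Fin 6 → ℂ) :
    letI x : MvPolynomial (Fin 3) ℂ := X 0
    letI y : MvPolynomial (Fin 3) ℂ := X 1
    letI z : MvPolynomial (Fin 3) ℂ := X 2
    LinearIndependent ℂ
      ![(z + C (a 0) * x) * (z + C (a 4) * y + C (a 5) * x)
          - (C (a 1) * x) * (C (a 2) * y + C (a 3) * x),
        (z + C (a 0) * x) * x - y * (C (a 2) * y + C (a 3) * x),
        (C (a 1) * x) * x - y * (z + C (a 4) * y + C (a 5) * x)] := by
  let pderivZAt (p : Fin 3 → ℂ) : MvPolynomial (Fin 3) ℂ →ₗ[ℂ] ℂ :=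
    (aeval p).toLinearMap ∘ₗ (pderiv 2).toLinearMap
  refine linearIndependent_of_det_functionals_ne_zero
    ![pderivZAt (Pi.single 2 1), pderivZAt (Pi.single 0 1), pderivZAt (Pi.single 1 1)]
    !![2, a 0 + a 5, a 4; 0, 1, 0; 0, 0, -1] ?_ (by simp [Matrix.det_fin_three])
  intro i j
  fin_cases i <;> fin_cases j <;> simp [pderivZAt, pderiv_X, one_add_one_eq_two]
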